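/- For even T, the distribution Π⁽¹⁾ on the staggered adoption set with Π⁽¹⁾(w_{(T)}) = Π⁽¹⁾(w_{(0)}) = 1/4 and Π⁽¹⁾(w_{(j)}) = I(j odd)/T for j = 1,...,T-1 is a probability distribution and solves the DATE equation with equal weights ξ = 1_T/T. -/

import Mathlib

open Finset

/-- The indicator vector in `ℝ^T` of a binary assignment path `w ∈ {0,1}^T`. -/
noncomputable def vecOf (T : ℕ) (w : Fin T → Bool) : Fin T → ℝ :=
  fun t => if w t then 1 else 0

/-- The centering matrix `J = I_T - (1/T)·1_T·1_T^⊤`. -/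
noncomputable def Jmat (T : ℕ) : Matrix (Fin T) (Fin T) ℝ :=
  fun i j => (if i = j then (1 : ℝ) else 0) - 1 / (T : ℝ)

/-- The mean assignment vector `E_{W ~ Π}[W]`. -/
noncomputable def EW (T : ℕ) (P : (Fin T → Bool) → ℝ) : Fin T → ℝ :=
  fun t => ∑ w : Fin T → Bool, P w * vecOf T w t

/-- `J (W - E[W])` for a given path `w`. -/
noncomputable def Jc (T : ℕ) (P : (Fin T → Bool) → ℝ) (w : Fin T → Bool) : Fin T → ℝ :=
  (Jmat T).mulVec (fun t => vecOf T w t - EW T P t)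

/-- The DATE equation: `E_{W~Π}[(diag(W) - ξ W^⊤) J (W - E[W])] = 0` as a vector
equation in `ℝ^T`; the `j`-th row of `(diag(W) - ξ W^⊤) J (W - E[W])` is
`W_j (J(W-E[W]))_j - ξ_j · W^⊤ J (W - E[W])`. -/
noncomputable def DATEeq (T : ℕ) (P : (Fin T → Bool) → ℝ) (ξ : Fin T → ℝ) : Prop :=
  ∀ j : Fin T,
    ∑ w : Fin T → Bool,
      P w * (vecOf T w j * Jc T P w j
        - ξ j * ∑ i : Fin T, vecOf T w i * Jc T P w i) = 0

/-- The staggered-adoption assignment `w_{(j)} ∈ {0,1}^T`: the last `j` entries are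
`1` and the first `T - j` entries are `0`. -/
def stag (T j : ℕ) : Fin T → Bool := fun t => decide (T - j ≤ (t : ℕ))

/-- The probability distribution on `{0,1}^T` supported on the staggered-adoption
set `{w_{(0)}, …, w_{(T)}}` with mass `m j` on `w_{(j)}`. -/
noncomputable def stagDist (T : ℕ) (m : ℕ → ℝ) : (Fin T → Bool) → ℝ :=
  fun w => ∑ j ∈ Finset.range (T + 1), if w = stag T j then m j else 0

/-- Masses for even `T`: `1/4` on `w_{(0)}` and `w_{(T)}`, and `1/T` on `w_{(j)}`
for odd `j`, `1 ≤ j ≤ T-1`. -/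
noncomputable def mEven (T : ℕ) : ℕ → ℝ := fun j =>
  if j = 0 ∨ j = T then 1 / 4
  else if Odd j then 1 / (T : ℝ) else 0

def cc (i : ℕ) : ℕ := (i + 1) / 2

lemma sum_ite_le (m b : ℕ) (hb : b ≤ m) (f : ℕ → ℝ) :
    ∑ i ∈ range m, (if b ≤ i then f i else 0)
      = ∑ i ∈ range m, f i - ∑ i ∈ range b, f i := by
  rw [← Finset.sum_filter]
  have h : (range m).filter (fun i => b ≤ i) = Finset.Ico b m := by
    ext x; simp [Finset.mem_Ico]; omega
  rw [h, Finset.sum_Ico_eq_sub f hb]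

lemma S1 (m : ℕ) : ∑ i ∈ range m, (2 * (i : ℝ) + 1) = (m : ℝ) ^ 2 := by
  induction m with
  | zero => simp
  | succ n ih => rw [Finset.sum_range_succ, ih]; push_cast; ring

lemma count_le (m b : ℕ) (hb : b ≤ m) :
    ∑ i ∈ range m, (if b ≤ i then (1 : ℝ) else 0) = (m : ℝ) - b := by
  rw [sum_ite_le m b hb]; simp

lemma sum_odd_le (m b : ℕ) (hb : b ≤ m) :
    ∑ i ∈ range m, (if b ≤ i then (2 * (i : ℝ) + 1) else 0) = (m : ℝ) ^ 2 - (b : ℝ) ^ 2 := by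
  rw [sum_ite_le m b hb, S1, S1]

lemma Shalf (n : ℕ) : ∑ i ∈ range (n + n), ((cc i : ℕ) : ℝ) = (n : ℝ) ^ 2 := by
  induction n with
  | zero => simp
  | succ n ih =>
    have h2 : n + 1 + (n + 1) = (n + n) + 1 + 1 := by omega
    rw [h2, Finset.sum_range_succ, Finset.sum_range_succ, ih]
    have e1 : cc (n + n) = n := by unfold cc; omega
    have e2 : cc (n + n + 1) = n + 1 := by unfold cc; omega
    rw [e1, e2]; push_cast; ring

lemma odd_sum (n : ℕ) (g : ℕ → ℝ) :
    ∑ k ∈ range (n + n), (if Odd k then g k else 0) = ∑ a ∈ range n, g (2 * a + 1) := by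
  induction n with
  | zero => simp
  | succ n ih =>
    have h2 : n + 1 + (n + 1) = (n + n) + 1 + 1 := by omega
    rw [h2, Finset.sum_range_succ, Finset.sum_range_succ, ih, Finset.sum_range_succ]
    have hne : ¬ Odd (n + n) := by rintro ⟨k, hk⟩; omega
    have ho : Odd (n + n + 1) := ⟨n, by omega⟩
    rw [if_neg hne, if_pos ho]
    have h3 : 2 * n + 1 = n + n + 1 := by omega
    rw [h3]; ring

lemma transfer (T : ℕ) (m : ℕ → ℝ) (F : (Fin T → Bool) → ℝ) :
    ∑ w : Fin T → Bool, stagDist T m w * F w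
      = ∑ j ∈ range (T + 1), m j * F (stag T j) := by
  unfold stagDist
  simp only [Finset.sum_mul]
  rw [Finset.sum_comm]
  refine Finset.sum_congr rfl ?_
  intro j _
  simp [ite_mul, Finset.sum_ite_eq']

lemma vec_stag (T k : ℕ) (t : Fin T) :
    vecOf T (stag T k) t = if T - k ≤ (t : ℕ) then 1 else 0 := by
  unfold vecOf stag
  simp

lemma sum_mEven (n : ℕ) (hn : 1 ≤ n) (f : ℕ → ℝ) :
    ∑ k ∈ range (n + n + 1), mEven (n + n) k * f k
      = f 0 / 4 + f (n + n) / 4 + (∑ a ∈ range n, f (2 * a + 1)) / (n + n : ℝ) := by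
  rw [Finset.sum_range_succ]
  have hT : mEven (n + n) (n + n) = 1 / 4 := by unfold mEven; rw [if_pos (Or.inr rfl)]
  have step : ∀ k ∈ range (n + n), mEven (n + n) k * f k
      = (if k = 0 then f 0 / 4 else 0) + (if Odd k then f k / (n + n : ℝ) else 0) := by
    intro k hk
    simp only [mem_range] at hk
    unfold mEven
    rcases eq_or_ne k 0 with h0 | h0
    · subst h0
      rw [if_pos (Or.inl rfl), if_pos rfl, if_neg (by rintro ⟨c, hc⟩; omega)]
      ring
    · have hno : ¬ (k = 0 ∨ k = n + n) := by omega
      rw [if_neg hno, if_neg h0]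
      by_cases hodd : Odd k
      · rw [if_pos hodd, if_pos hodd]; push_cast; ring
      · rw [if_neg hodd, if_neg hodd]; ring
  rw [Finset.sum_congr rfl step, Finset.sum_add_distrib, odd_sum]
  have h0 : ∑ k ∈ range (n + n), (if k = 0 then f 0 / 4 else 0) = f 0 / 4 := by
    rw [Finset.sum_ite_eq' (range (n + n)) 0 (fun _ => f 0 / 4),
      if_pos (mem_range.mpr (by omega))]
  rw [h0, hT, Finset.sum_div]; ring

lemma Jmat_mulVec (T : ℕ) (x : Fin T → ℝ) (i : Fin T) :
    (Jmat T).mulVec x i = x i - (∑ j, x j) / T := by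
  have h : ∀ j : Fin T, ((if i = j then (1 : ℝ) else 0) - 1 / T) * x j
      = (if i = j then x j else 0) - x j / T := by
    intro j; by_cases h : i = j <;> simp [h] <;> ring
  simp only [Matrix.mulVec, dotProduct, Jmat]
  rw [Finset.sum_congr rfl (fun j _ => h j), Finset.sum_sub_distrib,
    Finset.sum_ite_eq, if_pos (Finset.mem_univ i), ← Finset.sum_div]

lemma sum_vec (T k : ℕ) (hk : k ≤ T) :
    ∑ i : Fin T, vecOf T (stag T k) i = (k : ℝ) := by
  simp only [vec_stag]
  rw [Fin.sum_univ_eq_sum_range (fun i => if T - k ≤ i then (1 : ℝ) else 0) T,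
    count_le T (T - k) (by omega), Nat.cast_sub hk]
  ring

lemma EW_eq (n : ℕ) (hn : 1 ≤ n) (t : Fin (n + n)) :
    EW (n + n) (stagDist (n + n) (mEven (n + n))) t
      = 1 / 4 + (cc (t : ℕ) : ℝ) / (n + n : ℝ) := by
  have ht := t.isLt
  have hc : cc (t : ℕ) ≤ n := by unfold cc; omega
  unfold EW
  rw [transfer (n + n) (mEven (n + n)) (fun w => vecOf (n + n) w t), sum_mEven n hn]
  simp only [vec_stag]
  have hx : ∀ a ∈ range n,
      (if (n + n) - (2 * a + 1) ≤ (t : ℕ) then (1 : ℝ) else 0)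
        = (if n - cc (t : ℕ) ≤ a then (1 : ℝ) else 0) := by
    intro a ha
    simp only [mem_range] at ha
    refine if_congr ?_ rfl rfl
    unfold cc; omega
  rw [Finset.sum_congr rfl hx, count_le n (n - cc (t : ℕ)) (by omega),
    if_neg (by omega), if_pos (by omega), Nat.cast_sub hc]
  ring

lemma sum_EW (n : ℕ) (hn : 1 ≤ n) :
    ∑ i : Fin (n + n), EW (n + n) (stagDist (n + n) (mEven (n + n))) i = (n : ℝ) := by
  have h : ∀ i : Fin (n + n), EW (n + n) (stagDist (n + n) (mEven (n + n))) i
      = 1 / 4 + (cc (i : ℕ) : ℝ) / (n + n : ℝ) := fun i => EW_eq n hn i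
  rw [Finset.sum_congr rfl (fun i _ => h i), Finset.sum_add_distrib]
  simp only [Finset.sum_const, Finset.card_univ, Fintype.card_fin, nsmul_eq_mul]
  rw [← Finset.sum_div, Fin.sum_univ_eq_sum_range (fun i => ((cc i : ℕ) : ℝ)) (n + n), Shalf]
  have hn' : (n : ℝ) ≠ 0 := by positivity
  push_cast
  field_simp
  ring

lemma Jc_eq (n : ℕ) (hn : 1 ≤ n) (k : ℕ) (hk : k ≤ n + n) (i : Fin (n + n)) :
    Jc (n + n) (stagDist (n + n) (mEven (n + n))) (stag (n + n) k) i
      = (if (n + n) - k ≤ (i : ℕ) then (1 : ℝ) else 0) + 1 / 4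
        - ((cc (i : ℕ) : ℝ) + k) / (n + n : ℝ) := by
  have hn' : (n : ℝ) ≠ 0 := by positivity
  unfold Jc
  rw [Jmat_mulVec]
  rw [Finset.sum_sub_distrib, sum_vec (n + n) k hk, sum_EW n hn, EW_eq n hn i, vec_stag]
  generalize (if (n + n) - k ≤ (i : ℕ) then (1 : ℝ) else 0) = x
  push_cast
  field_simp
  ring

lemma key (n : ℕ) (hn : 1 ≤ n) (t : Fin (n + n)) :
    ∑ a ∈ range n, vecOf (n + n) (stag (n + n) (2 * a + 1)) t
        * Jc (n + n) (stagDist (n + n) (mEven (n + n))) (stag (n + n) (2 * a + 1)) t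
      = (cc (t : ℕ) : ℝ) / 4 := by
  have ht := t.isLt
  have hc : cc (t : ℕ) ≤ n := by unfold cc; omega
  have hn' : (n : ℝ) ≠ 0 := by positivity
  have step : ∀ a ∈ range n, vecOf (n + n) (stag (n + n) (2 * a + 1)) t
        * Jc (n + n) (stagDist (n + n) (mEven (n + n))) (stag (n + n) (2 * a + 1)) t
      = (if n - cc (t : ℕ) ≤ a then (5 / 4 - (cc (t : ℕ) : ℝ) / (n + n : ℝ)) else 0)
        - (if n - cc (t : ℕ) ≤ a then (2 * (a : ℝ) + 1) else 0) / (n + n : ℝ) := by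
    intro a ha
    simp only [mem_range] at ha
    rw [Jc_eq n hn (2 * a + 1) (by omega) t, vec_stag]
    by_cases h : n - cc (t : ℕ) ≤ a
    · have h' : (n + n) - (2 * a + 1) ≤ (t : ℕ) := by unfold cc at h; omega
      rw [if_pos h, if_pos h, if_pos h']
      push_cast
      ring
    · have h' : ¬ ((n + n) - (2 * a + 1) ≤ (t : ℕ)) := by unfold cc at h; omega
      rw [if_neg h, if_neg h, if_neg h']
      ring
  rw [Finset.sum_congr rfl step, Finset.sum_sub_distrib, ← Finset.sum_div,
    sum_odd_le n (n - cc (t : ℕ)) (by omega)]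
  have e1 : ∀ a, (if n - cc (t : ℕ) ≤ a then (5 / 4 - (cc (t : ℕ) : ℝ) / (n + n : ℝ)) else 0)
      = (5 / 4 - (cc (t : ℕ) : ℝ) / (n + n : ℝ)) * (if n - cc (t : ℕ) ≤ a then (1 : ℝ) else 0) := by
    intro a; split <;> ring
  rw [Finset.sum_congr rfl (fun a _ => e1 a), ← Finset.mul_sum,
    count_le n (n - cc (t : ℕ)) (by omega), Nat.cast_sub hc]
  field_simp
  ring

lemma inner_zero (n : ℕ) :
    ∑ i : Fin (n + n), vecOf (n + n) (stag (n + n) 0) i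
        * Jc (n + n) (stagDist (n + n) (mEven (n + n))) (stag (n + n) 0) i = 0 := by
  refine Finset.sum_eq_zero ?_
  intro i _
  rw [vec_stag, if_neg (by have := i.isLt; omega), zero_mul]

lemma inner_top (n : ℕ) (hn : 1 ≤ n) :
    ∑ i : Fin (n + n), vecOf (n + n) (stag (n + n) (n + n)) i
        * Jc (n + n) (stagDist (n + n) (mEven (n + n))) (stag (n + n) (n + n)) i = 0 := by
  have hn' : (n : ℝ) ≠ 0 := by positivity
  have step : ∀ i : Fin (n + n), vecOf (n + n) (stag (n + n) (n + n)) i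
        * Jc (n + n) (stagDist (n + n) (mEven (n + n))) (stag (n + n) (n + n)) i
      = 1 / 4 - ((cc (i : ℕ) : ℝ)) / (n + n : ℝ) := by
    intro i
    rw [Jc_eq n hn (n + n) le_rfl i, vec_stag, if_pos (by omega : (n + n) - (n + n) ≤ (i : ℕ))]
    field_simp
    push_cast
    ring
  rw [Finset.sum_congr rfl (fun i _ => step i), Finset.sum_sub_distrib]
  simp only [Finset.sum_const, Finset.card_univ, Fintype.card_fin, nsmul_eq_mul]
  rw [← Finset.sum_div, Fin.sum_univ_eq_sum_range (fun i => ((cc i : ℕ) : ℝ)) (n + n), Shalf]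
  push_cast
  field_simp
  ring

lemma inner_odd_total (n : ℕ) (hn : 1 ≤ n) :
    ∑ a ∈ range n, ∑ i : Fin (n + n), vecOf (n + n) (stag (n + n) (2 * a + 1)) i
        * Jc (n + n) (stagDist (n + n) (mEven (n + n))) (stag (n + n) (2 * a + 1)) i
      = (n : ℝ) ^ 2 / 4 := by
  rw [Finset.sum_comm]
  rw [Finset.sum_congr rfl (fun i _ => key n hn i), ← Finset.sum_div,
    Fin.sum_univ_eq_sum_range (fun i => ((cc i : ℕ) : ℝ)) (n + n), Shalf]


/-- For even `T`, the distribution `Π⁽¹⁾` on the staggered adoption set with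
`Π⁽¹⁾(w_{(T)}) = Π⁽¹⁾(w_{(0)}) = 1/4` and `Π⁽¹⁾(w_{(j)}) = I(j odd)/T` is a
probability distribution and solves the DATE equation with equal weights. -/
theorem stmt10 (T : ℕ) (hT : 2 ≤ T) (heven : Even T) :
    (∀ w, 0 ≤ stagDist T (mEven T) w) ∧
    (∑ w : Fin T → Bool, stagDist T (mEven T) w) = 1 ∧
    DATEeq T (stagDist T (mEven T)) (fun _ => 1 / (T : ℝ)) := by
  obtain ⟨n, hn⟩ := heven
  subst hn
  have hn1 : 1 ≤ n := by omega
  have hn' : (n : ℝ) ≠ 0 := by positivity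
  refine ⟨?_, ?_, ?_⟩
  · -- nonnegativity
    intro w
    unfold stagDist
    refine Finset.sum_nonneg ?_
    intro j _
    split
    · unfold mEven; split_ifs <;> positivity
    · exact le_refl 0
  · -- sums to one
    have h1 : (∑ w : Fin (n + n) → Bool, stagDist (n + n) (mEven (n + n)) w)
        = ∑ w : Fin (n + n) → Bool, stagDist (n + n) (mEven (n + n)) w * 1 := by simp
    rw [h1, transfer (n + n) (mEven (n + n)) (fun _ => (1 : ℝ)), sum_mEven n hn1]
    simp only [Finset.sum_const, Finset.card_range, nsmul_eq_mul, mul_one]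
    field_simp
    ring
  · -- DATE equation
    unfold DATEeq
    intro j
    rw [transfer (n + n) (mEven (n + n))
      (fun w => vecOf (n + n) w j * Jc (n + n) (stagDist (n + n) (mEven (n + n))) w j
        - (1 / ((n + n : ℕ) : ℝ)) * ∑ i : Fin (n + n),
            vecOf (n + n) w i * Jc (n + n) (stagDist (n + n) (mEven (n + n))) w i)]
    rw [sum_mEven n hn1]
    rw [inner_zero n, inner_top n hn1]
    rw [vec_stag (n + n) 0 j, if_neg (by have := j.isLt; omega), zero_mul]
    rw [vec_stag (n + n) (n + n) j, if_pos (by omega : (n + n) - (n + n) ≤ (j : ℕ)), one_mul]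
    rw [Jc_eq n hn1 (n + n) le_rfl j,
      if_pos (by omega : (n + n) - (n + n) ≤ (j : ℕ))]
    rw [Finset.sum_sub_distrib, key n hn1 j, ← Finset.mul_sum, inner_odd_total n hn1]
    push_cast
    field_simp
    ring
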